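/- arXiv:2304.13323 — 10 statements merged into one kernel-verified Lean document; each statement's English description precedes it below -/
import Mathlib

section
/- Let R be a commutative ring, σ a finite type, and let f be a formal power series in X with coefficients in the multivariate polynomial ring R[y_i : i ∈ σ]. Suppose f is regular in y and its constant coefficient f₀ equals 1. Then f is a unit, and its inverse f⁻¹ is also regular in y: for every n, the total degree in the y-variables of the n-th coefficient of f⁻¹ is at most n. -/
/-!
Writing `g` for the inverse of `f`, the identity `g = 1 + g * (1 - f)` expresses the `n`-th
coefficient of `g` through coefficients of `g` of index `< n` only, because `1 - f` has no constant
term; since degrees add under multiplication, regularity of `g` follows by strong induction on `n`.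
-/

open PowerSeries MvPolynomial

namespace PowerSeries

variable {R σ : Type*} [CommRing R]

theorem totalDegree_coeff_mul_le_of_constantCoeff_eq_zero {φ ψ : PowerSeries (MvPolynomial σ R)}
    {n : ℕ} (hφ : ∀ i < n, (coeff i φ).totalDegree ≤ i) (hψ : ∀ j, (coeff j ψ).totalDegree ≤ j)
    (hψ₀ : constantCoeff ψ = 0) : (coeff n (φ * ψ)).totalDegree ≤ n := by
  rw [coeff_mul]
  refine totalDegree_finsetSum_le fun ⟨i, j⟩ hij => ?_
  rw [Finset.HasAntidiagonal.mem_antidiagonal] at hij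
  rcases Nat.eq_zero_or_pos j with rfl | hj
  · simp [hψ₀]
  · calc (coeff i φ * coeff j ψ).totalDegree
        ≤ (coeff i φ).totalDegree + (coeff j ψ).totalDegree := totalDegree_mul _ _
      _ ≤ i + j := add_le_add (hφ i (by omega)) (hψ j)
      _ = n := hij

theorem totalDegree_coeff_one_sub_le {f : PowerSeries (MvPolynomial σ R)}
    (hf : ∀ n, (coeff n f).totalDegree ≤ n) (n : ℕ) : (coeff n (1 - f)).totalDegree ≤ n := by
  rw [map_sub, coeff_one]
  refine (totalDegree_sub _ _).trans (max_le ?_ (hf n))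
  split_ifs <;> simp

theorem totalDegree_coeff_le_of_mul_eq_one {f g : PowerSeries (MvPolynomial σ R)}
    (hf : ∀ n, (coeff n f).totalDegree ≤ n) (hf₀ : constantCoeff f = 1) (hgf : g * f = 1)
    (n : ℕ) : (coeff n g).totalDegree ≤ n := by
  have hg : g = 1 + g * (1 - f) := by rw [mul_sub, hgf]; ring
  induction n using Nat.strong_induction_on with
  | _ n ih =>
    rw [hg, map_add]
    refine (totalDegree_add _ _).trans (max_le ?_ ?_)
    · rw [coeff_one]
      split_ifs <;> simp
    · exact totalDegree_coeff_mul_le_of_constantCoeff_eq_zero ih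
        (totalDegree_coeff_one_sub_le hf) (by rw [map_sub, map_one, hf₀, sub_self])

end PowerSeries

theorem totalDegree_coeff_inverse_le_general {R : Type*} [CommRing R] {σ : Type*}
    (f : PowerSeries (MvPolynomial σ R))
    (hf : ∀ n : ℕ, (PowerSeries.coeff n f).totalDegree ≤ n)
    (h0 : PowerSeries.constantCoeff f = 1) :
    IsUnit f ∧
      ∀ n : ℕ,
        (PowerSeries.coeff n (Ring.inverse f)).totalDegree ≤ n := by
  have hunit : IsUnit f := isUnit_iff_constantCoeff.mpr (h0 ▸ isUnit_one)
  exact ⟨hunit, totalDegree_coeff_le_of_mul_eq_one hf h0 (Ring.inverse_mul_cancel f hunit)⟩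

/-- If `f` is a formal power series in `X` with coefficients in
`R[yᵢ : i ∈ σ]` (σ finite) which is regular in `y` and has constant coefficient `1`, then
`f` is a unit and its inverse is also regular in `y`. -/
theorem totalDegree_coeff_inverse_le {R : Type*} [CommRing R] {σ : Type*} [Fintype σ]
    (f : PowerSeries (MvPolynomial σ R))
    (hf : ∀ n : ℕ, (PowerSeries.coeff n f).totalDegree ≤ n)
    (h0 : PowerSeries.constantCoeff f = 1) :
    IsUnit f ∧
      ∀ n : ℕ,
        (PowerSeries.coeff n (Ring.inverse f)).totalDegree ≤ n :=
  totalDegree_coeff_inverse_le_general f hf h0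
end

section
/- Let R be a commutative ℚ-algebra, σ a finite type, and let h be a formal power series in X with coefficients in R[y_i : i ∈ σ] such that h has zero constant coefficient and h is regular in y. Then f = exp(h) is also regular in y: for every n, the total degree in the y-variables of the n-th coefficient of exp(h) is at most n. -/
/-!
Series regular in `y` form an `R`-subalgebra: the coefficient of `Xⁿ` in `f * g` is a sum of
products of coefficients of `Xⁱ` and `Xʲ` with `i + j = n`, and total degree is subadditive under
multiplication. Hence every power `hᵏ` is regular, and the `n`-th coefficient of `exp(h)` is a
`ℚ`-linear combination of the `n`-th coefficients of the powers `hᵏ`.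
-/

/-- Substitution of a power series `h` with zero constant coefficient into the exponential
series `exp = ∑_{k≥0} Xᵏ/k!`.  Since `h` has zero constant term, the coefficient of `Xⁿ` in
`exp(h)` only receives contributions from `hᵏ` with `k ≤ n`, so the finite sum below computes
the substitution exactly. -/
noncomputable def expSubst {R : Type*} [CommRing R] [Algebra ℚ R] (h : PowerSeries R) :
    PowerSeries R :=
  PowerSeries.mk fun n => ∑ k ∈ Finset.range (n + 1),
    algebraMap ℚ R (1 / k.factorial) * PowerSeries.coeff n (h ^ k)

namespace PowerSeries

open MvPolynomial

variable (σ R : Type*) [CommSemiring R]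

def regularSubalgebra : Subalgebra R (MvPolynomial σ R)⟦X⟧ where
  carrier := {f | ∀ n, (coeff n f).totalDegree ≤ n}
  mul_mem' {f g} hf hg n := by
    rw [coeff_mul]
    refine (totalDegree_finsetSum _ _).trans (Finset.sup_le fun p hp => ?_)
    calc (coeff p.1 f * coeff p.2 g).totalDegree
        ≤ (coeff p.1 f).totalDegree + (coeff p.2 g).totalDegree := totalDegree_mul _ _
      _ ≤ p.1 + p.2 := add_le_add (hf p.1) (hg p.2)
      _ = n := Finset.HasAntidiagonal.mem_antidiagonal.mp hp
  add_mem' {f g} hf hg n := by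
    rw [map_add]
    exact (totalDegree_add _ _).trans (max_le (hf n) (hg n))
  algebraMap_mem' r n := by
    rw [algebraMap_apply, coeff_C]
    split_ifs <;> simp

variable {σ R}

theorem mem_regularSubalgebra {f : (MvPolynomial σ R)⟦X⟧} :
    f ∈ regularSubalgebra σ R ↔ ∀ n, (coeff n f).totalDegree ≤ n :=
  Iff.rfl

end PowerSeries

open PowerSeries in
theorem totalDegree_coeff_expSubst_le_general {R : Type*} [CommRing R] [Algebra ℚ R]
    {σ : Type*}
    (h : PowerSeries (MvPolynomial σ R))
    (hreg : ∀ n : ℕ, (PowerSeries.coeff n h).totalDegree ≤ n) :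
    ∀ n : ℕ,
      (PowerSeries.coeff n (expSubst h)).totalDegree ≤ n := by
  intro n
  have hpow (k : ℕ) : h ^ k ∈ regularSubalgebra σ R :=
    pow_mem (mem_regularSubalgebra.mpr hreg) k
  rw [expSubst, coeff_mk]
  refine (MvPolynomial.totalDegree_finsetSum _ _).trans (Finset.sup_le fun k _ => ?_)
  rw [← Algebra.smul_def]
  exact (MvPolynomial.totalDegree_smul_le _ _).trans (hpow k n)

/-- Let `R` be a commutative `ℚ`-algebra and `σ` a finite type.  If `h` is a
formal power series in `X` with coefficients in `R[yᵢ : i ∈ σ]`, with zero constant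
coefficient and regular in `y`, then `exp(h)` is also regular in `y`. -/
theorem totalDegree_coeff_expSubst_le {R : Type*} [CommRing R] [Algebra ℚ R]
    {σ : Type*} [Fintype σ]
    (h : PowerSeries (MvPolynomial σ R))
    (h0 : PowerSeries.constantCoeff h = 0)
    (hreg : ∀ n : ℕ, (PowerSeries.coeff n h).totalDegree ≤ n) :
    ∀ n : ℕ,
      (PowerSeries.coeff n (expSubst h)).totalDegree ≤ n :=
  totalDegree_coeff_expSubst_le_general h hreg
end

section
/- Let R be a commutative ℚ-algebra, σ a finite type, and let f, h be formal power series in X with coefficients in R[y_i : i ∈ σ] such that h has zero constant coefficient, f = exp(h), f has constant coefficient 1, and f is regular in y. Then h is regular in y: for every n, the total degree in the y-variables of the n-th coefficient of h is at most n. -/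
open PowerSeries
open MvPolynomial (totalDegree_finsetSum_le totalDegree_mul totalDegree_smul_le totalDegree_sub)

section Regular

variable {R σ : Type*} [CommSemiring R]

theorem totalDegree_coeff_mul_coeff_le {m : ℕ} {x : ℕ × ℕ}
    {p q : PowerSeries (MvPolynomial σ R)} (hx : x.1 + x.2 = m)
    (hp : (coeff x.1 p).totalDegree ≤ x.1) (hq : (coeff x.2 q).totalDegree ≤ x.2) :
    (coeff x.1 p * coeff x.2 q).totalDegree ≤ m :=
  hx ▸ (totalDegree_mul _ _).trans (add_le_add hp hq)

def IsRegularBelow (n : ℕ) (p : PowerSeries (MvPolynomial σ R)) : Prop :=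
  ∀ m < n, (coeff m p).totalDegree ≤ m

namespace IsRegularBelow

variable {n : ℕ} {p q : PowerSeries (MvPolynomial σ R)}

theorem one : IsRegularBelow n (1 : PowerSeries (MvPolynomial σ R)) := by
  intro m _
  rw [coeff_one]
  split_ifs <;> simp

theorem mul (hp : IsRegularBelow n p) (hq : IsRegularBelow n q) : IsRegularBelow n (p * q) := by
  intro m hm
  rw [coeff_mul]
  refine totalDegree_finsetSum_le fun x hx => ?_
  rw [Finset.HasAntidiagonal.mem_antidiagonal] at hx
  exact totalDegree_coeff_mul_coeff_le hx (hp _ (by omega)) (hq _ (by omega))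

theorem pow (hp : IsRegularBelow n p) (k : ℕ) : IsRegularBelow n (p ^ k) := by
  induction k with
  | zero => simpa using one
  | succ k ih => simpa [pow_succ] using ih.mul hp

end IsRegularBelow

/-- With both constant terms zero, `[Xⁿ] (p q)` only involves coefficients of index `< n`. -/
theorem totalDegree_coeff_mul_le {n : ℕ} {p q : PowerSeries (MvPolynomial σ R)}
    (hp0 : constantCoeff p = 0) (hq0 : constantCoeff q = 0)
    (hp : IsRegularBelow n p) (hq : IsRegularBelow n q) :
    (coeff n (p * q)).totalDegree ≤ n := by
  rw [coeff_mul]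
  refine totalDegree_finsetSum_le fun x hx => ?_
  rw [Finset.HasAntidiagonal.mem_antidiagonal] at hx
  rcases Nat.eq_zero_or_pos x.1 with h1 | h1
  · simp [h1, hp0]
  rcases Nat.eq_zero_or_pos x.2 with h2 | h2
  · simp [h2, hq0]
  exact totalDegree_coeff_mul_coeff_le hx (hp _ (by omega)) (hq _ (by omega))

theorem totalDegree_coeff_pow_le {n k : ℕ} {h : PowerSeries (MvPolynomial σ R)}
    (h0 : constantCoeff h = 0) (hreg : IsRegularBelow n h) (hk : 2 ≤ k) :
    (coeff n (h ^ k)).totalDegree ≤ n := by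
  obtain ⟨j, rfl⟩ := Nat.exists_eq_add_of_le' hk
  rw [pow_succ']
  exact totalDegree_coeff_mul_le h0 (by simp [h0]) hreg (hreg.pow _)

end Regular

section ExpSubst

variable {R σ : Type*} [CommRing R] [Algebra ℚ R]

theorem coeff_expSubst_of_ne_zero (h : PowerSeries R) {n : ℕ} (hn : n ≠ 0) :
    coeff n (expSubst h) = coeff n h +
      ∑ k ∈ Finset.Ico 2 (n + 1), algebraMap ℚ R (1 / k.factorial) * coeff n (h ^ k) := by
  rw [expSubst, coeff_mk, Finset.range_eq_Ico, Finset.sum_eq_sum_Ico_succ_bot (by omega),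
    Finset.sum_eq_sum_Ico_succ_bot (by omega)]
  simp [coeff_one, hn]

theorem totalDegree_coeff_expSubst_sub_le {n : ℕ} {h : PowerSeries (MvPolynomial σ R)}
    (h0 : constantCoeff h = 0) (hn : n ≠ 0) (hreg : IsRegularBelow n h) :
    (coeff n (expSubst h) - coeff n h).totalDegree ≤ n := by
  rw [coeff_expSubst_of_ne_zero h hn, add_sub_cancel_left]
  refine totalDegree_finsetSum_le fun k hk => ?_
  rw [← Algebra.smul_def]
  exact (totalDegree_smul_le _ _).trans
    (totalDegree_coeff_pow_le h0 hreg (Finset.mem_Ico.1 hk).1)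

end ExpSubst

theorem totalDegree_coeff_log_le_general {R : Type*} [CommRing R] [Algebra ℚ R]
    {σ : Type*}
    (f h : PowerSeries (MvPolynomial σ R))
    (h0 : PowerSeries.constantCoeff h = 0)
    (hf : f = expSubst h)
    (hreg : ∀ n : ℕ, (PowerSeries.coeff n f).totalDegree ≤ n) :
    ∀ n : ℕ, (PowerSeries.coeff n h).totalDegree ≤ n := by
  intro n
  induction n using Nat.strong_induction_on with
  | _ n IH =>
    rcases eq_or_ne n 0 with rfl | hn
    · simp [h0]
    calc (coeff n h).totalDegree = (coeff n f - (coeff n f - coeff n h)).totalDegree := by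
          rw [sub_sub_cancel]
      _ ≤ max (coeff n f).totalDegree (coeff n f - coeff n h).totalDegree := totalDegree_sub _ _
      _ ≤ n := max_le (hreg n) (hf ▸ totalDegree_coeff_expSubst_sub_le h0 hn IH)

/-- Let `R` be a commutative `ℚ`-algebra and `σ` a finite type.  If `h` is a
formal power series in `X` with coefficients in `R[yᵢ : i ∈ σ]` with zero constant
coefficient, `f = exp(h)` has constant coefficient `1` and `f` is regular in `y`, then `h`
is regular in `y`. -/
theorem totalDegree_coeff_log_le {R : Type*} [CommRing R] [Algebra ℚ R]
    {σ : Type*} [Fintype σ]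
    (f h : PowerSeries (MvPolynomial σ R))
    (h0 : PowerSeries.constantCoeff h = 0)
    (hf : f = expSubst h)
    (hf0 : PowerSeries.constantCoeff f = 1)
    (hreg : ∀ n : ℕ, (PowerSeries.coeff n f).totalDegree ≤ n) :
    ∀ n : ℕ, (PowerSeries.coeff n h).totalDegree ≤ n :=
  totalDegree_coeff_log_le_general f h h0 hf hreg
end

section
/- Let R be a commutative ℚ-algebra, m ≥ 1, and let ψ ∈ R[[X]] be a power series with zero constant coefficient such that X^m divides ψ. Then X^{2m} divides exp(ψ)·(1 − ψ) − 1. (This is the order-doubling estimate underlying the Newton iteration φ_i = φ_{i−1}(1 − ln φ_{i−1} + h) for computing exp(h): if φ_{i−1} = exp(h + ψ) with X^m ∣ ψ, then φ_{i−1}(1 − ψ) agrees with exp(h) modulo X^{2m}.) -/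
open PowerSeries Finset Nat

lemma coeff_pow_eq_zero_of_X_pow_dvd {R : Type*} [CommSemiring R] {ψ : PowerSeries R}
    {m n k : ℕ} (hdvd : X ^ m ∣ ψ) (hn : n < m * k) : coeff n (ψ ^ k) = 0 :=
  X_pow_dvd_iff.mp (pow_mul (X : PowerSeries R) m k ▸ pow_dvd_pow_of_dvd hdvd k) n hn

section

variable {R : Type*} [CommRing R] [Algebra ℚ R] {ψ : PowerSeries R}

lemma coeff_expSubst_eq_sum_range (h0 : constantCoeff ψ = 0) {n N : ℕ} (hN : n < N) :
    coeff n (expSubst ψ) = ∑ k ∈ range N, algebraMap ℚ R (1 / k !) * coeff n (ψ ^ k) := by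
  rw [expSubst, coeff_mk]
  refine sum_subset (range_subset_range.2 hN) fun k _ hk => ?_
  have hnk : n < 1 * k := by simpa using hk
  have hX : X ^ 1 ∣ ψ := by rwa [pow_one, X_dvd_iff]
  rw [coeff_pow_eq_zero_of_X_pow_dvd hX hnk, mul_zero]

lemma coeff_expSubst_eq_coeff_one_add (h0 : constantCoeff ψ = 0) {n : ℕ}
    (hn : ∀ k, 2 ≤ k → coeff n (ψ ^ k) = 0) : coeff n (expSubst ψ) = coeff n (1 + ψ) := by
  rw [coeff_expSubst_eq_sum_range h0 (by omega : n < n + 2),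
    ← sum_subset (range_subset_range.2 (by omega : 2 ≤ n + 2))
      fun k _ hk => by rw [hn k (by simp only [mem_range] at hk; omega), mul_zero]]
  simp [sum_range_succ]

lemma X_pow_two_mul_dvd_expSubst_sub (h0 : constantCoeff ψ = 0) {m : ℕ} (hdvd : X ^ m ∣ ψ) :
    X ^ (2 * m) ∣ expSubst ψ - (1 + ψ) := by
  refine X_pow_dvd_iff.mpr fun n hn => ?_
  rw [map_sub, sub_eq_zero]
  exact coeff_expSubst_eq_coeff_one_add h0 fun k hk =>
    coeff_pow_eq_zero_of_X_pow_dvd hdvd (by nlinarith)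

end

theorem newton_exp_order_doubling_general {R : Type*} [CommRing R] [Algebra ℚ R]
    (m : ℕ) (ψ : PowerSeries R)
    (h0 : PowerSeries.constantCoeff ψ = 0)
    (hdvd : (PowerSeries.X : PowerSeries R) ^ m ∣ ψ) :
    (PowerSeries.X : PowerSeries R) ^ (2 * m) ∣ expSubst ψ * (1 - ψ) - 1 := by
  have hsq : (X : PowerSeries R) ^ (2 * m) ∣ ψ ^ 2 := by
    simpa only [← pow_mul, mul_comm m 2] using pow_dvd_pow_of_dvd hdvd 2
  rw [show expSubst ψ * (1 - ψ) - 1 = (expSubst ψ - (1 + ψ)) * (1 - ψ) - ψ ^ 2 by ring]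
  exact dvd_sub ((X_pow_two_mul_dvd_expSubst_sub h0 hdvd).mul_right _) hsq

/-- Order-doubling estimate for the Newton iteration computing `exp`:
if `ψ` has zero constant coefficient and `X^m ∣ ψ` with `m ≥ 1`, then
`X^{2m} ∣ exp(ψ)·(1 − ψ) − 1`. -/
theorem newton_exp_order_doubling {R : Type*} [CommRing R] [Algebra ℚ R]
    (m : ℕ) (hm : 1 ≤ m) (ψ : PowerSeries R)
    (h0 : PowerSeries.constantCoeff ψ = 0)
    (hdvd : (PowerSeries.X : PowerSeries R) ^ m ∣ ψ) :
    (PowerSeries.X : PowerSeries R) ^ (2 * m) ∣ expSubst ψ * (1 - ψ) - 1 :=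
  newton_exp_order_doubling_general m ψ h0 hdvd
end

section
/- Let R be a commutative ring, let d ≥ 1 and r ≥ 1 be integers, and let σ : R[y₁,…,y_r] → R[Y] be the R-algebra homomorphism with σ(y_j) = Y^{d^{j−1}} for j = 1,…,r (the Kronecker substitution). For a family f = (f₀, f₁, …, f_{d−1}) of polynomials fᵢ ∈ R[y₁,…,y_r] with total degree of fᵢ at most i for each i, define Φ(f) = Σ_{i=0}^{d−1} σ(fᵢ)·Y^{i·d^r} ∈ R[Y]. Then Φ is injective: if f and g are two such families with Φ(f) = Φ(g), then fᵢ = gᵢ for all i = 0,…,d−1. -/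
/-! The substitution `y_j ↦ Y^(d^j)` sends the monomial `y^a` to `Y^(∑ a_j d^j)`, whose exponent is
the base-`d` numeral with digits `a_j`. When `totalDegree fᵢ ≤ i < d` every digit is `< d`, so the
substitution is injective on such polynomials and `deg σ(fᵢ) < d^r`; the summands
`σ(fᵢ) Y^(i d^r)` therefore fill disjoint blocks of coefficients. -/

namespace Polynomial

variable {R : Type*} [Semiring R]

theorem coeff_sum_mul_X_pow_mul {d N : ℕ} (q : Fin d → R[X]) (hq : ∀ i, (q i).degree < N)
    (i : Fin d) {k : ℕ} (hk : k < N) :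
    (∑ j : Fin d, q j * X ^ ((j : ℕ) * N)).coeff (k + i * N) = (q i).coeff k := by
  simp only [finsetSum_coeff, coeff_mul_X_pow']
  rw [Finset.sum_eq_single i (fun j _ hji => ?_) (by simp)]
  · simp
  split_ifs with hle
  · have hji : (j : ℕ) < i := by
      rcases lt_or_gt_of_ne (Fin.val_ne_of_ne hji) with h | h
      · exact h
      · nlinarith
    refine coeff_eq_zero_of_degree_lt ((hq j).trans_le (WithBot.coe_le_coe.mpr ?_))
    apply Nat.le_sub_of_add_le
    nlinarith
  · rfl

theorem eq_of_sum_mul_X_pow_mul_eq {d N : ℕ} {q q' : Fin d → R[X]}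
    (hq : ∀ i, (q i).degree < N) (hq' : ∀ i, (q' i).degree < N)
    (h : ∑ i : Fin d, q i * X ^ ((i : ℕ) * N) = ∑ i : Fin d, q' i * X ^ ((i : ℕ) * N)) :
    q = q' := by
  funext i
  ext k
  by_cases hk : k < N
  · rw [← coeff_sum_mul_X_pow_mul q hq i hk, h, coeff_sum_mul_X_pow_mul q' hq' i hk]
  · have hNk : (N : WithBot ℕ) ≤ k := WithBot.coe_le_coe.mpr (not_lt.mp hk)
    rw [coeff_eq_zero_of_degree_lt ((hq i).trans_le hNk),
      coeff_eq_zero_of_degree_lt ((hq' i).trans_le hNk)]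

end Polynomial

namespace MvPolynomial

open Finsupp (weight)

theorem support_subset_of_totalDegree_lt {σ R : Type*} [CommSemiring R] {p : MvPolynomial σ R}
    {d : ℕ} (hp : p.totalDegree < d) : ↑p.support ⊆ {a : σ →₀ ℕ | ∀ j, a j < d} :=
  fun _ ha j => ((le_degreeOf_of_mem_support j ha).trans (degreeOf_le_totalDegree p j)).trans_lt hp

section Weight

variable {σ R : Type*} [CommSemiring R] (w : σ → ℕ)

theorem aeval_X_pow_monomial (a : σ →₀ ℕ) (c : R) :
    aeval (fun i => (Polynomial.X : Polynomial R) ^ w i) (monomial a c) =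
      Polynomial.monomial (weight w a) c := by
  rw [aeval_monomial, Finsupp.prod, Polynomial.C_mul_X_pow_eq_monomial.symm]
  simp_rw [← pow_mul, Finset.prod_pow_eq_pow_sum, Finsupp.weight_apply, Finsupp.sum, smul_eq_mul,
    mul_comm]
  rfl

theorem coeff_aeval_X_pow (p : MvPolynomial σ R) (n : ℕ) :
    (aeval (fun i => (Polynomial.X : Polynomial R) ^ w i) p).coeff n =
      ∑ a ∈ p.support with weight w a = n, p.coeff a := by
  conv_lhs => rw [p.as_sum]
  simp only [map_sum, aeval_X_pow_monomial, Polynomial.finsetSum_coeff, Polynomial.coeff_monomial,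
    Finset.sum_filter]

theorem degree_aeval_X_pow_lt {p : MvPolynomial σ R} {N : ℕ}
    (hp : ∀ a ∈ p.support, weight w a < N) :
    (aeval (fun i => (Polynomial.X : Polynomial R) ^ w i) p).degree < N := by
  refine Polynomial.degree_lt_iff_coeff_zero _ _ |>.mpr fun n hn => ?_
  rw [coeff_aeval_X_pow]
  refine Finset.sum_eq_zero fun a ha => ?_
  rw [Finset.mem_filter] at ha
  exact absurd hn (not_le.mpr (ha.2 ▸ hp a ha.1))

theorem coeff_aeval_X_pow_weight {p : MvPolynomial σ R} {a : σ →₀ ℕ}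
    (hw : ∀ b ∈ p.support, weight w b = weight w a → b = a) :
    (aeval (fun i => (Polynomial.X : Polynomial R) ^ w i) p).coeff (weight w a) = p.coeff a := by
  rw [coeff_aeval_X_pow, Finset.sum_eq_single a]
  · intro b hb hba
    rw [Finset.mem_filter] at hb
    exact absurd (hw b hb.1 hb.2) hba
  · intro ha
    rw [Finset.mem_filter, not_and_or] at ha
    simpa using ha

theorem eq_of_aeval_X_pow_eq {S : Set (σ →₀ ℕ)} (hw : Set.InjOn (weight w) S)
    {p q : MvPolynomial σ R} (hp : ↑p.support ⊆ S) (hq : ↑q.support ⊆ S)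
    (h : aeval (fun i => (Polynomial.X : Polynomial R) ^ w i) p =
      aeval (fun i => (Polynomial.X : Polynomial R) ^ w i) q) :
    p = q := by
  ext a
  by_cases ha : a ∈ S
  · rw [← coeff_aeval_X_pow_weight w fun b hb => hw (hp hb) ha, h,
      coeff_aeval_X_pow_weight w fun b hb => hw (hq hb) ha]
  · rw [notMem_support_iff.mp fun h => ha (hp h), notMem_support_iff.mp fun h => ha (hq h)]

end Weight

section Kronecker

variable {d r : ℕ}

theorem weight_pow_eq_finFunctionFinEquiv {a : Fin r →₀ ℕ} (ha : ∀ j, a j < d) :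
    weight (fun j : Fin r => d ^ (j : ℕ)) a =
      finFunctionFinEquiv fun j => (⟨a j, ha j⟩ : Fin d) := by
  simp [Finsupp.weight_eq_sum]

theorem weight_pow_lt {a : Fin r →₀ ℕ} (ha : ∀ j, a j < d) :
    weight (fun j : Fin r => d ^ (j : ℕ)) a < d ^ r :=
  weight_pow_eq_finFunctionFinEquiv ha ▸ Fin.isLt _

theorem weight_pow_injOn :
    Set.InjOn (weight fun j : Fin r => d ^ (j : ℕ)) {a | ∀ j, a j < d} := by
  intro a ha b hb hab
  rw [weight_pow_eq_finFunctionFinEquiv ha, weight_pow_eq_finFunctionFinEquiv hb, Fin.val_inj,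
    finFunctionFinEquiv.apply_eq_iff_eq] at hab
  ext j
  exact congrArg Fin.val (congrFun hab j)

end Kronecker

end MvPolynomial

open MvPolynomial in
theorem kronecker_substitution_injective_general {R : Type*} [CommRing R]
    (d r : ℕ)
    (f g : Fin d → MvPolynomial (Fin r) R)
    (hf : ∀ i : Fin d, (f i).totalDegree ≤ (i : ℕ))
    (hg : ∀ i : Fin d, (g i).totalDegree ≤ (i : ℕ))
    (heq :
      ∑ i : Fin d,
          MvPolynomial.aeval
              (fun j : Fin r => (Polynomial.X : Polynomial R) ^ d ^ (j : ℕ)) (f i) *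
            Polynomial.X ^ ((i : ℕ) * d ^ r) =
        ∑ i : Fin d,
          MvPolynomial.aeval
              (fun j : Fin r => (Polynomial.X : Polynomial R) ^ d ^ (j : ℕ)) (g i) *
            Polynomial.X ^ ((i : ℕ) * d ^ r)) :
    ∀ i : Fin d, f i = g i := by
  have support_f i := support_subset_of_totalDegree_lt ((hf i).trans_lt i.isLt)
  have support_g i := support_subset_of_totalDegree_lt ((hg i).trans_lt i.isLt)
  have hsubst := Polynomial.eq_of_sum_mul_X_pow_mul_eq
    (fun i => degree_aeval_X_pow_lt _ fun _ ha => weight_pow_lt (support_f i ha))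
    (fun i => degree_aeval_X_pow_lt _ fun _ ha => weight_pow_lt (support_g i ha)) heq
  exact fun i => eq_of_aeval_X_pow_eq _ weight_pow_injOn (support_f i) (support_g i)
    (congrFun hsubst i)

/-- Injectivity of the Kronecker substitution.  Let `σ` be the `R`-algebra
map `R[y₁,…,y_r] → R[Y]` sending `y_j ↦ Y^{d^{j-1}}`, and for a family
`f = (f₀,…,f_{d-1})` of polynomials with `totalDegree fᵢ ≤ i` set
`Φ(f) = ∑_{i<d} σ(fᵢ)·Y^{i·d^r}`.  Then `Φ(f) = Φ(g)` forces `fᵢ = gᵢ` for all `i`. -/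
theorem kronecker_substitution_injective {R : Type*} [CommRing R]
    (d r : ℕ) (hd : 1 ≤ d) (hr : 1 ≤ r)
    (f g : Fin d → MvPolynomial (Fin r) R)
    (hf : ∀ i : Fin d, (f i).totalDegree ≤ (i : ℕ))
    (hg : ∀ i : Fin d, (g i).totalDegree ≤ (i : ℕ))
    (heq :
      ∑ i : Fin d,
          MvPolynomial.aeval
              (fun j : Fin r => (Polynomial.X : Polynomial R) ^ d ^ (j : ℕ)) (f i) *
            Polynomial.X ^ ((i : ℕ) * d ^ r) =
        ∑ i : Fin d,
          MvPolynomial.aeval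
              (fun j : Fin r => (Polynomial.X : Polynomial R) ^ d ^ (j : ℕ)) (g i) *
            Polynomial.X ^ ((i : ℕ) * d ^ r)) :
    ∀ i : Fin d, f i = g i :=
  kronecker_substitution_injective_general d r f g hf hg heq
end

section
/- Let R be a commutative ℚ-algebra, let h ∈ R[[X]] have zero constant coefficient and set f = exp(h). Let b₁, …, b_k ∈ R with power sums p_n = b₁ⁿ + ⋯ + b_kⁿ. Then ∏_{i=1}^{k} f(bᵢ·X) = exp(H), where f(bᵢ·X) denotes the rescaling of f by bᵢ (replacing X by bᵢX) and H is the power series whose coefficient of Xⁿ is p_n·hₙ for every n ≥ 1 and whose constant coefficient is 0. -/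
open Finset

namespace PowerSeries

noncomputable abbrev modXPow (R : Type*) [CommRing R] (n : ℕ) :
    R⟦X⟧ →+* R⟦X⟧ ⧸ Ideal.span {(X : R⟦X⟧) ^ (n + 1)} :=
  Ideal.Quotient.mk _

variable {R : Type*} [CommRing R]

theorem eq_of_forall_modXPow_eq {f g : R⟦X⟧} (hfg : ∀ n, modXPow R n f = modXPow R n g) :
    f = g := by
  ext n
  have hdvd := hfg n
  rw [Ideal.Quotient.eq, Ideal.mem_span_singleton] at hdvd
  exact sub_eq_zero.mp (X_pow_dvd_iff.mp hdvd n (Nat.lt_succ_self n))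

theorem modXPow_pow_eq_zero {h : R⟦X⟧} (h0 : constantCoeff h = 0) (n : ℕ) :
    modXPow R n h ^ (n + 1) = 0 := by
  rw [← map_pow, Ideal.Quotient.eq_zero_iff_mem, Ideal.mem_span_singleton]
  exact pow_dvd_pow_of_dvd (X_dvd_iff.mpr h0) _

theorem coeff_pow_eq_zero_of_lt {h : R⟦X⟧} (h0 : constantCoeff h = 0) {m k : ℕ} (hmk : m < k) :
    coeff m (h ^ k) = 0 :=
  coeff_of_lt_order m
    ((Nat.cast_lt.mpr hmk).trans_le (le_order_pow_of_constantCoeff_eq_zero k h0))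

end PowerSeries

open PowerSeries

section

variable {R : Type*} [CommRing R] [Algebra ℚ R]

theorem coeff_expSubst_of_le {h : R⟦X⟧} (h0 : constantCoeff h = 0) {m N : ℕ} (hmN : m ≤ N) :
    coeff m (expSubst h) = ∑ k ∈ range (N + 1), (k.factorial : ℚ)⁻¹ • coeff m (h ^ k) := by
  rw [expSubst, coeff_mk]
  simp only [Algebra.smul_def, one_div]
  apply sum_subset (range_subset_range.mpr (by omega))
  intro k _ hk
  rw [mem_range, not_lt] at hk
  rw [coeff_pow_eq_zero_of_lt h0 (by omega), mul_zero]

theorem modXPow_expSubst {h : R⟦X⟧} (h0 : constantCoeff h = 0) (n : ℕ) :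
    modXPow R n (expSubst h) = IsNilpotent.exp (modXPow R n h) := by
  rw [IsNilpotent.exp_eq_sum (modXPow_pow_eq_zero h0 n)]
  simp only [← map_pow, ← map_rat_smul, ← map_sum]
  rw [Ideal.Quotient.eq, Ideal.mem_span_singleton, X_pow_dvd_iff]
  intro m hm
  rw [map_sub, coeff_expSubst_of_le h0 (Nat.lt_succ_iff.mp hm), map_sum, sub_eq_zero]
  simp only [coeff_smul]

@[simp]
theorem expSubst_zero : expSubst (0 : R⟦X⟧) = 1 :=
  eq_of_forall_modXPow_eq fun n => by
    rw [modXPow_expSubst (map_zero _), map_zero, IsNilpotent.exp_zero, map_one]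

theorem expSubst_add {a b : R⟦X⟧} (ha : constantCoeff a = 0) (hb : constantCoeff b = 0) :
    expSubst (a + b) = expSubst a * expSubst b :=
  eq_of_forall_modXPow_eq fun n => by
    have hab : constantCoeff (a + b) = 0 := by rw [map_add, ha, hb, add_zero]
    rw [map_mul, modXPow_expSubst hab, modXPow_expSubst ha, modXPow_expSubst hb, map_add,
      IsNilpotent.exp_add_of_commute (Commute.all _ _) ⟨_, modXPow_pow_eq_zero ha n⟩
        ⟨_, modXPow_pow_eq_zero hb n⟩]

theorem expSubst_sum {ι : Type*} (s : Finset ι) {g : ι → R⟦X⟧}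
    (hg : ∀ i ∈ s, constantCoeff (g i) = 0) :
    expSubst (∑ i ∈ s, g i) = ∏ i ∈ s, expSubst (g i) := by
  induction s using Finset.cons_induction with
  | empty => simp
  | cons i s hi ih =>
    rw [sum_cons, prod_cons, ← ih fun j hj => hg j (mem_cons_of_mem hj)]
    refine expSubst_add (hg i (mem_cons_self i s)) ?_
    rw [map_sum]
    exact sum_eq_zero fun j hj => hg j (mem_cons_of_mem hj)

theorem rescale_expSubst (r : R) (h : R⟦X⟧) :
    rescale r (expSubst h) = expSubst (rescale r h) := by
  ext n
  simp only [expSubst, coeff_rescale, coeff_mk, ← map_pow, mul_sum]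
  exact sum_congr rfl fun k _ => mul_left_comm _ _ _

end

/-- If `h` has zero constant coefficient, `f = exp(h)`, and
`b₁,…,b_k ∈ R` have power sums `p_n = ∑ᵢ bᵢⁿ`, then
`∏ᵢ f(bᵢX) = exp(H)` where `H` has zero constant coefficient and its `Xⁿ`-coefficient is
`p_n·hₙ` for `n ≥ 1`. -/
theorem prod_rescale_expSubst {R : Type*} [CommRing R] [Algebra ℚ R]
    (h f : PowerSeries R) (h0 : PowerSeries.constantCoeff h = 0)
    (hf : f = expSubst h)
    (k : ℕ) (b : Fin k → R) (H : PowerSeries R)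
    (hH : H = PowerSeries.mk fun n =>
      if n = 0 then 0 else (∑ i : Fin k, b i ^ n) * PowerSeries.coeff n h) :
    (∏ i : Fin k, PowerSeries.rescale (b i) f) = expSubst H := by
  have hH_sum : H = ∑ i, rescale (b i) h := by
    ext n
    rcases eq_or_ne n 0 with rfl | hn
    · simp [hH, h0]
    · simp [hH, hn, coeff_rescale, sum_mul]
  have hrescale0 (r : R) : constantCoeff (rescale r h) = 0 := by
    simp [← coeff_zero_eq_constantCoeff_apply, coeff_rescale, h0]
  rw [hf, hH_sum, expSubst_sum _ fun i _ => hrescale0 (b i)]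
  exact prod_congr rfl fun i _ => rescale_expSubst (b i) h
end

section
/- Let g ∈ ℚ[[X]] be the Todd series, i.e., the unique power series satisfying g·(exp(X) − 1) = X (formally g = X/(e^X − 1), with constant coefficient 1). Then g = exp(L), where L is the power series with zero constant coefficient whose coefficient of Xⁿ for n ≥ 1 equals −B'ₙ/(n·n!), and B'ₙ denotes the n-th Bernoulli number in the convention B'₁ = 1/2 (so B'ₙ equals the usual Bernoulli number Bₙ for all n ≠ 1). Equivalently, ln(X/(e^X − 1)) = −(1/2)X − (1/24)X² + (1/2880)X⁴ + ⋯ = −Σ_{n≥1} B'ₙ/(n·n!)·Xⁿ. -/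
open PowerSeries

section ExpSubst

variable {R : Type*} [CommRing R] [Algebra ℚ R]

theorem expSubst_eq_subst_exp {h : R⟦X⟧} (hh : constantCoeff h = 0) :
    expSubst h = (exp R).subst h := by
  ext n
  rw [coeff_subst' (HasSubst.of_constantCoeff_zero' hh), expSubst, coeff_mk,
    finsum_eq_sum_of_support_subset _ (s := Finset.range (n + 1))]
  · simp [coeff_exp]
  · intro k hk
    contrapose! hk
    rw [Finset.coe_range, Set.mem_Iio, not_lt] at hk
    have hnk : (n : ℕ∞) < k := by exact_mod_cast hk
    simp [coeff_of_lt_order n (hnk.trans_le (le_order_pow_of_constantCoeff_eq_zero k hh))]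

theorem constantCoeff_expSubst (h : R⟦X⟧) : constantCoeff (expSubst h) = 1 := by
  rw [← coeff_zero_eq_constantCoeff_apply]
  simp [expSubst]

theorem derivative_expSubst {h : R⟦X⟧} (hh : constantCoeff h = 0) :
    d⁄dX R (expSubst h) = d⁄dX R h * expSubst h := by
  rw [expSubst_eq_subst_exp hh, derivative_subst (HasSubst.of_constantCoeff_zero' hh),
    derivative_exp, mul_comm]

end ExpSubst

theorem PowerSeries.eq_of_derivative_eq_mul {R : Type*} [CommRing R] [IsAddTorsionFree R]
    {f g c : R⟦X⟧} (hf : d⁄dX R f = c * f) (hg : d⁄dX R g = c * g)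
    (h0 : constantCoeff f = constantCoeff g) : f = g := by
  ext n
  induction n using Nat.strong_induction_on with
  | _ n ih =>
    cases n with
    | zero => simpa using h0
    | succ n =>
      have h : (n + 1) • coeff (n + 1) f = (n + 1) • coeff (n + 1) g := by
        simp only [nsmul_eq_mul, Nat.cast_add_one, mul_comm _ (coeff (n + 1) _),
          ← coeff_derivative, hf, hg, coeff_mul]
        exact Finset.sum_congr rfl fun p hp => by rw [ih p.2 (Finset.Nat.antidiagonal.snd_lt hp)]
      exact (smul_right_inj n.succ_ne_zero).mp h

theorem PowerSeries.exp_sub_one_ne_zero (A : Type*) [Ring A] [Algebra ℚ A] [Nontrivial A] :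
    exp A - 1 ≠ 0 := fun h => by
  simpa [coeff_exp] using congrArg (coeff 1) h

noncomputable def toddLog : ℚ⟦X⟧ :=
  mk fun n => if n = 0 then 0 else -(bernoulli' n) / (n * n.factorial)

theorem constantCoeff_toddLog : constantCoeff toddLog = 0 := by
  rw [← coeff_zero_eq_constantCoeff_apply]
  simp [toddLog]

theorem X_mul_derivative_toddLog : X * d⁄dX ℚ toddLog = 1 - bernoulli'PowerSeries ℚ := by
  ext (_ | n)
  · simp [bernoulli'PowerSeries]
  · have hn : (n + 1 : ℚ) ≠ 0 := n.cast_add_one_ne_zero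
    rw [coeff_succ_X_mul, coeff_derivative, map_sub, coeff_one, if_neg n.succ_ne_zero]
    simp only [toddLog, bernoulli'PowerSeries, coeff_mk, if_neg n.succ_ne_zero,
      Algebra.algebraMap_self, RingHom.id_apply, Nat.factorial_succ]
    push_cast
    field_simp
    ring

theorem bernoulli'PowerSeries_eq_mul_exp :
    bernoulli'PowerSeries ℚ = bernoulliPowerSeries ℚ * exp ℚ :=
  mul_right_cancel₀ (exp_sub_one_ne_zero ℚ) <| by
    rw [bernoulli'PowerSeries_mul_exp_sub_one, mul_right_comm,
      bernoulliPowerSeries_mul_exp_sub_one]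

theorem X_mul_derivative_bernoulliPowerSeries :
    X * d⁄dX ℚ (bernoulliPowerSeries ℚ) =
      (1 - bernoulli'PowerSeries ℚ) * bernoulliPowerSeries ℚ := by
  have hB := bernoulliPowerSeries_mul_exp_sub_one ℚ
  have hdB : bernoulliPowerSeries ℚ * exp ℚ +
      (exp ℚ - 1) * d⁄dX ℚ (bernoulliPowerSeries ℚ) = 1 := by
    simpa [derivative_exp] using congrArg (d⁄dX ℚ) hB
  refine mul_right_cancel₀ (exp_sub_one_ne_zero ℚ) ?_
  rw [bernoulli'PowerSeries_eq_mul_exp]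
  linear_combination X * hdB + (bernoulliPowerSeries ℚ * exp ℚ - 1) * hB

theorem derivative_bernoulliPowerSeries :
    d⁄dX ℚ (bernoulliPowerSeries ℚ) = d⁄dX ℚ toddLog * bernoulliPowerSeries ℚ :=
  mul_left_cancel₀ X_ne_zero <| by
    rw [X_mul_derivative_bernoulliPowerSeries, ← mul_assoc, X_mul_derivative_toddLog]

/-- The Todd series `g = X/(eˣ − 1)` (the unique power series with
`g·(exp(X) − 1) = X`) satisfies `g = exp(L)` where `L = −∑_{n≥1} B'ₙ/(n·n!) Xⁿ`, with `B'ₙ`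
the Bernoulli numbers in the convention `B'₁ = 1/2` (Mathlib's `bernoulli'`). -/
theorem todd_series_eq_exp_bernoulli (g L : PowerSeries ℚ)
    (hg : g * (PowerSeries.exp ℚ - 1) = PowerSeries.X)
    (hL : L = PowerSeries.mk fun n =>
      if n = 0 then 0 else -(bernoulli' n) / (n * n.factorial)) :
    g = expSubst L := by
  have hgB : g = bernoulliPowerSeries ℚ := mul_right_cancel₀ (exp_sub_one_ne_zero ℚ) <| by
    rw [hg, bernoulliPowerSeries_mul_exp_sub_one]
  have hL' : L = toddLog := hL
  rw [hgB, hL']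
  refine eq_of_derivative_eq_mul derivative_bernoulliPowerSeries
    (derivative_expSubst constantCoeff_toddLog) ?_
  rw [constantCoeff_expSubst, ← coeff_zero_eq_constantCoeff_apply]
  simp [bernoulliPowerSeries]
end

section
/- In the ring of formal power series in X over the polynomial ring ℚ[y], let u = 1 − y·(exp(X) − 1), where exp(X) − 1 is viewed with coefficients in ℚ[y]. Then u has constant coefficient 1, hence is a unit, and its inverse u⁻¹ = Σ Fₙ(y) Xⁿ is regular in y: for every n, the polynomial Fₙ(y) has degree at most n, and for n ≥ 1 it has zero constant term (Fₙ(0) = 0), while F₀ = 1. -/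
/-!
The series `u = 1 - y (eˣ - 1)` has constant coefficient `1` and its coefficient of `Xⁿ`,
`n ≥ 1`, is `-y/n!`, of degree `1 ≤ n`. Since `u₀ = 1`, the coefficients of `v = u⁻¹` obey
`vₙ = -∑_{i ≥ 1} uᵢ vₙ₋ᵢ`, so `deg vₙ ≤ n` by strong induction. Setting `y = 0` is a ring
homomorphism sending `u` to `1`, hence `u⁻¹` to `1`: every `vₙ` with `n ≥ 1` vanishes at `y = 0`.
-/

open PowerSeries
open scoped Polynomial

theorem map_ringInverse {F M N : Type*} [MonoidWithZero M] [MonoidWithZero N] [FunLike F M N]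
    [MonoidHomClass F M N] (f : F) {a : M} (ha : IsUnit a) :
    f (Ring.inverse a) = Ring.inverse (f a) := by
  obtain ⟨u, rfl⟩ := ha
  rw [Ring.inverse_unit]
  exact (Ring.inverse_unit (Units.map (f : M →* N) u)).symm

namespace PowerSeries

variable {R : Type*} [CommRing R]

theorem ringInverse_eq_invOfUnit {φ : R⟦X⟧} {u : Rˣ} (h : constantCoeff φ = u) :
    Ring.inverse φ = invOfUnit φ u := by
  have hφ : IsUnit φ := isUnit_iff_constantCoeff.mpr (h ▸ u.isUnit)
  rw [← Ring.inverse_mul_cancel_left φ (invOfUnit φ u) hφ, mul_invOfUnit φ u h, mul_one]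

/-- Here `y` is the variable of the coefficient ring `R[X]`. -/
def IsRegularInY (f : R[X]⟦X⟧) : Prop := ∀ n, (coeff n f).natDegree ≤ n

theorem IsRegularInY.invOfUnit_one {φ : R[X]⟦X⟧} (hφ : IsRegularInY φ) :
    IsRegularInY (invOfUnit φ 1) := by
  intro n
  induction n using Nat.strong_induction_on with
  | _ n ih =>
    rw [coeff_invOfUnit]
    split_ifs
    · simp
    · simp only [inv_one, Units.val_one, neg_mul, one_mul, Polynomial.natDegree_neg]
      refine Polynomial.natDegree_sum_le_of_forall_le _ _ fun x hx => ?_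
      split_ifs with hlt
      · calc _ ≤ x.1 + x.2 := Polynomial.natDegree_mul_le_of_le (hφ x.1) (ih x.2 hlt)
          _ = n := Finset.HasAntidiagonal.mem_antidiagonal.mp hx
      · simp

theorem IsRegularInY.ringInverse {φ : R[X]⟦X⟧} (hφ : IsRegularInY φ) (h : constantCoeff φ = 1) :
    IsRegularInY (Ring.inverse φ) := by
  rw [ringInverse_eq_invOfUnit (u := 1) h]
  exact hφ.invOfUnit_one

theorem isRegularInY_one_sub_C_X_mul_exp_sub_one [Algebra ℚ R] :
    IsRegularInY (1 - C (Polynomial.X : R[X]) * (exp R[X] - 1)) := by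
  rintro (_ | n)
  · simp only [map_sub, coeff_one, coeff_C_mul, coeff_exp]
    simp
  · simp only [map_sub, coeff_one, coeff_C_mul, coeff_exp, if_neg n.succ_ne_zero, zero_sub,
      sub_zero, Polynomial.natDegree_neg, Polynomial.algebraMap_apply]
    calc _ ≤ 1 + 0 := Polynomial.natDegree_mul_le_of_le Polynomial.natDegree_X_le
            (Polynomial.natDegree_C _).le
      _ ≤ n + 1 := by omega

end PowerSeries

/-- In `ℚ[y][[X]]`, let `u = 1 − y·(exp(X) − 1)`.  Then `u` has constant
coefficient `1`, hence is a unit, and its inverse `u⁻¹ = ∑ Fₙ(y) Xⁿ` is regular in `y`: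
`F₀ = 1`, `deg Fₙ ≤ n` for all `n`, and `Fₙ(0) = 0` for `n ≥ 1`. -/
theorem inverse_one_sub_y_exp_regular (u : PowerSeries (Polynomial ℚ))
    (hu : u = 1 - PowerSeries.C (R := Polynomial ℚ) Polynomial.X *
      (PowerSeries.exp (Polynomial ℚ) - 1)) :
    PowerSeries.constantCoeff (R := Polynomial ℚ) u = 1 ∧ IsUnit u ∧
      PowerSeries.coeff (R := Polynomial ℚ) 0 (Ring.inverse u) = 1 ∧
      (∀ n : ℕ, (PowerSeries.coeff (R := Polynomial ℚ) n (Ring.inverse u)).natDegree ≤ n) ∧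
      (∀ n : ℕ, 1 ≤ n →
        (PowerSeries.coeff (R := Polynomial ℚ) n (Ring.inverse u)).coeff 0 = 0) := by
  have hconst : constantCoeff u = 1 := by simp [hu]
  have hunit : IsUnit u := isUnit_iff_constantCoeff.mpr (hconst ▸ isUnit_one)
  have hy0 : map Polynomial.constantCoeff u = 1 := by simp [hu]
  refine ⟨hconst, hunit, ?_, (hu ▸ isRegularInY_one_sub_C_X_mul_exp_sub_one).ringInverse hconst,
    fun n hn => ?_⟩
  · rw [coeff_zero_eq_constantCoeff_apply, map_ringInverse _ hunit, hconst, Ring.inverse_one]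
  · have h := congrArg (coeff n) (map_ringInverse (map Polynomial.constantCoeff) hunit)
    rwa [hy0, Ring.inverse_one, coeff_map, coeff_one, if_neg (by omega),
      Polynomial.constantCoeff_apply] at h
end

section
/- Let B and B̄ be finite multisets (lists) of nonzero rational numbers, let g ∈ ℚ[[X]] be the Todd series (the unique power series with g·(exp(X) − 1) = X), and set a = (Σ_{b∈B} b − Σ_{b∈B̄} b)/2. Define F = exp(aX) · ∏_{b∈B} g(bX) · (∏_{b∈B̄} g(bX))⁻¹ ∈ ℚ[[X]], where g(bX) denotes rescaling X by b (each g(bX) has constant coefficient 1, so the inverse exists). Then F is an even power series: the coefficient of Xⁿ in F is 0 for every odd n; equivalently F(−X) = F(X). (In particular the generalized Todd polynomials td_n(a, B, B̄) vanish for all odd n.) -/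
/-!
Rescaling `X ↦ bX` in the Todd identity `g(X)·(exp X − 1) = X` and substituting `X ↦ −X` gives
`g(−bX) = g(bX)·exp(bX)`. Hence `X ↦ −X` multiplies `∏_{b∈B} g(bX)` by `exp((∑B)X)`, the
inverse of `∏_{b∈B̄} g(bX)` by `exp(−(∑B̄)X)`, and `exp(aX)` by `exp(−2aX)`; with
`2a = ∑B − ∑B̄` these factors cancel.
-/

open PowerSeries

theorem map_ringInverse_of_leftInverse {M N F G : Type*} [MonoidWithZero M] [MonoidWithZero N]
    [FunLike F M N] [MonoidWithZeroHomClass F M N] [FunLike G N M] [MonoidHomClass G N M]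
    (f : F) (g : G) (hfg : Function.LeftInverse g f) (a : M) :
    f (Ring.inverse a) = Ring.inverse (f a) := by
  by_cases ha : IsUnit a
  · obtain ⟨u, rfl⟩ := ha
    simpa using (Ring.inverse_unit (Units.map (f : M →* N) u)).symm
  · rw [Ring.inverse_non_unit _ ha, Ring.inverse_non_unit _ (mt (IsUnit.of_leftInverse g hfg) ha),
      map_zero]

namespace PowerSeries

noncomputable def generalizedToddSeries {R : Type*} [CommRing R] [Algebra ℚ R] (g : R⟦X⟧) (a : R)
    (B Bbar : Multiset R) : R⟦X⟧ :=
  rescale a (exp R) * (B.map fun b => rescale b g).prod *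
    Ring.inverse ((Bbar.map fun b => rescale b g).prod)

section CommRing

variable {R : Type*} [CommRing R]

theorem rescale_neg_one_leftInverse :
    Function.LeftInverse (rescale (-1 : R)) (rescale (-1 : R)) := fun f => by
  rw [rescale_rescale, neg_one_mul, neg_neg, rescale_one, RingHom.id_apply]

theorem ringInverse_rescale_neg_one (f : R⟦X⟧) :
    rescale (-1) (Ring.inverse f) = Ring.inverse (rescale (-1) f) :=
  map_ringInverse_of_leftInverse _ _ rescale_neg_one_leftInverse f

theorem coeff_eq_zero_of_rescale_neg_one_eq [IsAddTorsionFree R] {f : R⟦X⟧}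
    (hf : rescale (-1) f = f) {n : ℕ} (hn : Odd n) : coeff n f = 0 := by
  have h := congrArg (coeff n) hf
  rw [coeff_rescale, hn.neg_one_pow, neg_one_mul] at h
  exact self_eq_neg.mp h.symm

variable [Algebra ℚ R]

theorem multiset_prod_rescale_exp (M : Multiset R) :
    (M.map fun b => rescale b (exp R)).prod = rescale M.sum (exp R) := by
  induction M using Multiset.induction with
  | empty => simp [rescale_zero, constantCoeff_exp]
  | cons c M ih =>
    rw [Multiset.map_cons, Multiset.prod_cons, Multiset.sum_cons, ih, exp_mul_exp_eq_exp_add]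

theorem ringInverse_rescale_exp (c : R) :
    Ring.inverse (rescale c (exp R)) = rescale (-c) (exp R) := by
  have h : rescale c (exp R) * rescale (-c) (exp R) = 1 := by
    rw [exp_mul_exp_eq_exp_add, add_neg_cancel, rescale_zero, RingHom.comp_apply,
      constantCoeff_exp, map_one]
  exact Ring.inverse_unit (Units.mkOfMulEqOne _ _ h)

variable [IsDomain R] {g : R⟦X⟧}

theorem rescale_neg_one_eq_mul_exp_of_mul_exp_sub_one_eq_X (hg : g * (exp R - 1) = X) :
    rescale (-1) g = g * exp R := by
  have hne : rescale (-1 : R) (exp R) - 1 ≠ 0 := fun h => by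
    simpa [coeff_rescale, coeff_exp] using congrArg (coeff 1) h
  refine mul_right_cancel₀ hne ?_
  calc rescale (-1) g * (rescale (-1) (exp R) - 1) = rescale (-1) (g * (exp R - 1)) := by
        rw [map_mul, map_sub, map_one]
    _ = -(g * (exp R - 1)) := by rw [hg, rescale_neg_one_X]
    _ = g * exp R * (rescale (-1) (exp R) - 1) := by
        have hexp : exp R * rescale (-1) (exp R) = 1 := exp_mul_exp_neg_eq_one
        linear_combination (-g) * hexp

theorem rescale_neg_one_rescale_eq_mul_rescale_exp (hg : g * (exp R - 1) = X) (b : R) :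
    rescale (-1) (rescale b g) = rescale b g * rescale b (exp R) := by
  rw [rescale_rescale, mul_comm, ← rescale_rescale,
    rescale_neg_one_eq_mul_exp_of_mul_exp_sub_one_eq_X hg, map_mul]

theorem rescale_neg_one_multiset_prod_rescale (hg : g * (exp R - 1) = X) (M : Multiset R) :
    rescale (-1) (M.map fun b => rescale b g).prod =
      (M.map fun b => rescale b g).prod * rescale M.sum (exp R) := by
  rw [map_multiset_prod, Multiset.map_map, ← multiset_prod_rescale_exp, ← Multiset.prod_map_mul]
  exact congrArg _ <|
    Multiset.map_congr rfl fun b _ => rescale_neg_one_rescale_eq_mul_rescale_exp hg b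

theorem rescale_neg_one_generalizedToddSeries (hg : g * (exp R - 1) = X) {a : R}
    {B Bbar : Multiset R} (ha : 2 * a = B.sum - Bbar.sum) :
    rescale (-1) (generalizedToddSeries g a B Bbar) = generalizedToddSeries g a B Bbar := by
  have hexp : rescale (a * -1) (exp R) * rescale B.sum (exp R) * rescale (-Bbar.sum) (exp R) =
      rescale a (exp R) := by
    rw [exp_mul_exp_eq_exp_add, exp_mul_exp_eq_exp_add,
      show a * -1 + B.sum + -Bbar.sum = a by linear_combination -ha]
  rw [generalizedToddSeries, map_mul, map_mul, ringInverse_rescale_neg_one,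
    rescale_neg_one_multiset_prod_rescale hg, rescale_neg_one_multiset_prod_rescale hg,
    rescale_rescale, Ring.mul_inverse_rev, ringInverse_rescale_exp]
  linear_combination ((B.map fun b => rescale b g).prod *
    Ring.inverse ((Bbar.map fun b => rescale b g).prod)) * hexp

end CommRing

end PowerSeries

theorem generalized_todd_even_general (B Bbar : Multiset ℚ)
    (g : PowerSeries ℚ) (hg : g * (PowerSeries.exp ℚ - 1) = PowerSeries.X)
    (a : ℚ) (ha : a = (B.sum - Bbar.sum) / 2)
    (F : PowerSeries ℚ)
    (hF : F = PowerSeries.rescale a (PowerSeries.exp ℚ) *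
        (B.map fun b => PowerSeries.rescale b g).prod *
        Ring.inverse ((Bbar.map fun b => PowerSeries.rescale b g).prod)) :
    (∀ n : ℕ, Odd n → PowerSeries.coeff n F = 0) ∧
      PowerSeries.rescale (-1) F = F := by
  have hF_even : PowerSeries.rescale (-1) F = F := by
    rw [hF]
    exact rescale_neg_one_generalizedToddSeries hg (by rw [ha]; ring)
  exact ⟨fun n hn => coeff_eq_zero_of_rescale_neg_one_eq hF_even hn, hF_even⟩

/-- Let `B`, `B̄` be finite multisets of nonzero rationals, `g` the Todd
series (`g·(exp(X) − 1) = X`), and `a = (∑_{b∈B} b − ∑_{b∈B̄} b)/2`.  Then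
`F = exp(aX)·∏_{b∈B} g(bX)·(∏_{b∈B̄} g(bX))⁻¹` is an even power series: its odd
coefficients vanish; equivalently `F(−X) = F(X)`. -/
theorem generalized_todd_even (B Bbar : Multiset ℚ)
    (hB : ∀ b ∈ B, b ≠ 0) (hBbar : ∀ b ∈ Bbar, b ≠ 0)
    (g : PowerSeries ℚ) (hg : g * (PowerSeries.exp ℚ - 1) = PowerSeries.X)
    (a : ℚ) (ha : a = (B.sum - Bbar.sum) / 2)
    (F : PowerSeries ℚ)
    (hF : F = PowerSeries.rescale a (PowerSeries.exp ℚ) *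
        (B.map fun b => PowerSeries.rescale b g).prod *
        Ring.inverse ((Bbar.map fun b => PowerSeries.rescale b g).prod)) :
    (∀ n : ℕ, Odd n → PowerSeries.coeff n F = 0) ∧
      PowerSeries.rescale (-1) F = F :=
  generalized_todd_even_general B Bbar g hg a ha F hF
end

section
/- For every natural number n, the following identity holds in the field of formal Laurent series ℚ((s)): the coefficient of s⁰ in 1/(1 − e^s)² + 2·e^{ns}/((1 − e^{−s})(1 − e^s)) + e^{2ns}/(1 − e^{−s})² equals (n+1)². Here e^{cs} denotes the image in ℚ((s)) of the rescaled exponential power series exp(cs), and the displayed inverses exist because 1 − e^{±s} are nonzero elements of the field ℚ((s)). (This computes the number of lattice points in the n-th dilate of the unit square via Brion's decomposition.) -/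
/-!
With `u = e^s` we have `e^{-s} = u⁻¹`, `e^{ns} = uⁿ` and `e^{2ns} = u²ⁿ`, and the sum of the three
vertex-cone terms collapses to `((1 - u^{n+1}) / (1 - u))² = (1 + u + ⋯ + uⁿ)²`. This is the image of
a power series whose constant term is `(n + 1)²`, since `e^s` has constant term `1`.
-/

/-- The formal Laurent series `e^{cs} ∈ ℚ((s))`: the image of the rescaled exponential power
series `exp(cs)` under the canonical embedding `ℚ[[s]] → ℚ((s))`. -/
noncomputable def expLaurent (c : ℚ) : LaurentSeries ℚ :=
  (HahnSeries.ofPowerSeries ℤ ℚ) (PowerSeries.rescale c (PowerSeries.exp ℚ))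

open Finset

theorem unit_square_cone_sum_eq_sq_geom_sum {K : Type*} [Field K] {u : K} (hu₀ : u ≠ 0)
    (hu₁ : u ≠ 1) (n : ℕ) :
    ((1 - u) ^ 2)⁻¹ + 2 * u ^ n * ((1 - u⁻¹) * (1 - u))⁻¹ + u ^ (2 * n) * ((1 - u⁻¹) ^ 2)⁻¹ =
      (∑ k ∈ range (n + 1), u ^ k) ^ 2 := by
  have : 1 - u ≠ 0 := sub_ne_zero.mpr hu₁.symm
  rw [geom_sum_eq hu₁]
  field_simp
  ring

theorem LaurentSeries.coeff_zero_ofPowerSeries {R : Type*} [Semiring R] (f : PowerSeries R) :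
    (HahnSeries.ofPowerSeries ℤ R f).coeff 0 = PowerSeries.constantCoeff f := by
  simpa using HahnSeries.ofPowerSeries_apply_coeff f 0

theorem constantCoeff_rescale_exp (c : ℚ) :
    PowerSeries.constantCoeff (PowerSeries.rescale c (PowerSeries.exp ℚ)) = 1 := by
  simp [← PowerSeries.coeff_zero_eq_constantCoeff_apply, PowerSeries.coeff_rescale]

theorem expLaurent_add (a b : ℚ) : expLaurent (a + b) = expLaurent a * expLaurent b := by
  simp only [expLaurent, ← map_mul, PowerSeries.exp_mul_exp_eq_exp_add]

theorem expLaurent_zero : expLaurent 0 = 1 := by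
  simp [expLaurent]

theorem expLaurent_natCast (k : ℕ) : expLaurent k = expLaurent 1 ^ k := by
  induction k with
  | zero => simpa using expLaurent_zero
  | succ k ih => rw [pow_succ, ← ih, ← expLaurent_add, Nat.cast_succ]

theorem expLaurent_mul_expLaurent_neg (c : ℚ) : expLaurent c * expLaurent (-c) = 1 := by
  rw [← expLaurent_add, add_neg_cancel, expLaurent_zero]

theorem expLaurent_neg (c : ℚ) : expLaurent (-c) = (expLaurent c)⁻¹ :=
  (inv_eq_of_mul_eq_one_right (expLaurent_mul_expLaurent_neg c)).symm

theorem expLaurent_ne_zero (c : ℚ) : expLaurent c ≠ 0 :=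
  left_ne_zero_of_mul_eq_one (expLaurent_mul_expLaurent_neg c)

theorem coeff_one_expLaurent (c : ℚ) : (expLaurent c).coeff 1 = c := by
  simpa [expLaurent, PowerSeries.coeff_rescale] using
    HahnSeries.ofPowerSeries_apply_coeff (PowerSeries.rescale c (PowerSeries.exp ℚ)) 1

theorem expLaurent_ne_one {c : ℚ} (hc : c ≠ 0) : expLaurent c ≠ 1 := by
  intro h
  have h₁ := congrArg (HahnSeries.coeff · 1) h
  simp only [coeff_one_expLaurent, HahnSeries.coeff_one] at h₁
  exact hc (by simpa using h₁)

theorem coeff_zero_sq_geom_sum_expLaurent (c : ℚ) (m : ℕ) :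
    ((∑ k ∈ range m, expLaurent c ^ k) ^ 2).coeff 0 = (m : ℚ) ^ 2 := by
  simp only [expLaurent, ← map_pow, ← map_sum, LaurentSeries.coeff_zero_ofPowerSeries]
  simp [map_sum, constantCoeff_rescale_exp]

/-- In the field `ℚ((s))`, for every natural number `n`, the coefficient of
`s⁰` in `1/(1 − e^s)² + 2 e^{ns}/((1 − e^{−s})(1 − e^s)) + e^{2ns}/(1 − e^{−s})²` equals
`(n+1)²` (the number of lattice points in the `n`-th dilate of the unit square). -/
theorem lattice_count_unit_square (n : ℕ) :
    HahnSeries.coeff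
        (((1 - expLaurent 1) ^ 2)⁻¹ +
          2 * expLaurent n * ((1 - expLaurent (-1)) * (1 - expLaurent 1))⁻¹ +
          expLaurent (2 * n) * ((1 - expLaurent (-1)) ^ 2)⁻¹) 0 =
      ((n : ℚ) + 1) ^ 2 := by
  have h2n : expLaurent (2 * n) = expLaurent 1 ^ (2 * n) := by
    rw [← expLaurent_natCast, Nat.cast_mul, Nat.cast_ofNat]
  rw [h2n, expLaurent_natCast, expLaurent_neg,
    unit_square_cone_sum_eq_sq_geom_sum (expLaurent_ne_zero 1) (expLaurent_ne_one one_ne_zero),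
    coeff_zero_sq_geom_sum_expLaurent, Nat.cast_succ]
end
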